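/- Let K_B > 0, m_s, m_k > 0, n_s, n_k > 0, λ_{sk} > 0, u_s, u_k ∈ ℝ³, T_s, T_k > 0, and let f_s : ℝ³ → ℝ be integrable with ∫ f_s(v) dv = n_s and ∫ v f_s(v) dv = n_s u_s, each component of v f_s integrable. Set ν_{sk} = λ_{sk} n_k, a_{sk} = m_k/(m_s+m_k), u_{sk} = (1−a_{sk}) u_s + a_{sk} u_k, b_{sk} = 2a_{sk}m_s/(m_s+m_k), γ_{sk} = (m_s a_{sk}/3)(2m_k/(m_s+m_k)−a_{sk}), T_{sk} = (1−b_{sk})T_s + b_{sk}T_k + (γ_{sk}/K_B)|u_s−u_k|², and M(v;a,b) = (2πb)^{−3/2} exp(−|v−a|²/(2b)). Then the momentum exchange rate of the BBGSP bi-species operator equals ∫ m_s v ν_{sk} ( n_s M(v; u_{sk}, K_B T_{sk}/m_s) − f_s(v) ) dv = λ_{sk} (m_s m_k/(m_s+m_k)) n_s n_k (u_k − u_s) =: 𝓡_{sk}; in particular, if λ_{sk} = λ_{ks} then 𝓡_{sk} + 𝓡_{ks} = 0, so the BBGSP model conserves total momentum. -/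

import Mathlib

open MeasureTheory RealInnerProductSpace

/-!
The Maxwellian `M(·; c, d)` is the translate by `c` of an even density of unit mass, so the odd
part of `v ↦ M(v; c, d) v` integrates to zero and its first moment is `c`. By linearity the
momentum exchange rate is `m_s ν_sk n_s (u_sk - u_s) = λ_sk m_s n_k n_s a_sk (u_k - u_s) = 𝓡_sk`,
and `𝓡_sk + 𝓡_ks = 0` is algebra. The one point needing care is that the Maxwellian is a genuine
Gaussian, i.e. `T_sk > 0`: `b_sk = 2 m_s m_k / (m_s + m_k)²` lies in `(0, 1)` and
`γ_sk = m_s a_sk² / 3 ≥ 0`, so `T_sk` is a convex combination of `T_s, T_k` plus a nonnegative term.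
-/

open Real Module

section Symmetric

variable {V : Type*} [NormedAddCommGroup V] [NormedSpace ℝ V] [MeasurableSpace V] [BorelSpace V]
  {μ : Measure V}

theorem integral_eq_zero_of_odd [μ.IsNegInvariant] {f : V → V} (hf : ∀ v, f (-v) = -f v) :
    ∫ v, f v ∂μ = 0 := by
  have h := integral_neg_eq_self f μ
  simp only [hf, integral_neg] at h
  have h2 : (2 : ℝ) • ∫ v, f v ∂μ = 0 := by
    rw [two_smul]
    nth_rewrite 1 [← h]
    exact neg_add_cancel _
  exact (smul_eq_zero.mp h2).resolve_left two_ne_zero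

variable [μ.IsAddRightInvariant] {g : V → ℝ}

theorem MeasureTheory.Integrable.comp_sub_smul_id (hg : Integrable g μ)
    (hgv : Integrable (fun v => g v • v) μ) (c : V) :
    Integrable (fun v => g (v - c) • v) μ := by
  simpa [← smul_add] using (hgv.add (hg.smul_const c)).comp_sub_right c

theorem integral_comp_sub_smul_id_of_even [CompleteSpace V] [μ.IsNegInvariant]
    (heven : ∀ v, g (-v) = g v) (hg : Integrable g μ) (hgv : Integrable (fun v => g v • v) μ)
    (c : V) :
    ∫ v, g (v - c) • v ∂μ = (∫ v, g v ∂μ) • c := by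
  calc ∫ v, g (v - c) • v ∂μ = ∫ w, (g w • w + g w • c) ∂μ := by
        simpa [smul_add] using integral_sub_right_eq_self (μ := μ) (fun w => g w • (w + c)) c
    _ = (∫ v, g v ∂μ) • c := by
        rw [integral_add hgv (hg.smul_const c), integral_smul_const,
          integral_eq_zero_of_odd (fun v => by rw [heven, smul_neg]), zero_add]

end Symmetric

section Gaussian

variable {V : Type*} [NormedAddCommGroup V] [NormedSpace ℝ V] [FiniteDimensional ℝ V]
  [Nontrivial V] [MeasurableSpace V] [BorelSpace V] (μ : Measure V) [μ.IsAddHaarMeasure]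
  {b : ℝ}

theorem integrable_norm_pow_mul_exp_neg_mul_sq_norm (hb : 0 < b) (k : ℕ) :
    Integrable (fun v => ‖v‖ ^ k * rexp (-b * ‖v‖ ^ 2)) μ := by
  rw [integrable_fun_norm_addHaar μ (f := fun y => y ^ k * rexp (-b * y ^ 2))]
  refine (integrableOn_rpow_mul_exp_neg_mul_sq hb (s := (finrank ℝ V - 1 + k : ℕ))
    (neg_one_lt_zero.trans_le (Nat.cast_nonneg _))).congr_fun
    (fun y _ => ?_) measurableSet_Ioi
  simp only [rpow_natCast, pow_add, smul_eq_mul, mul_assoc]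

theorem integrable_exp_neg_mul_sq_norm_smul (hb : 0 < b) :
    Integrable (fun v => rexp (-b * ‖v‖ ^ 2) • v) μ := by
  refine (integrable_norm_pow_mul_exp_neg_mul_sq_norm μ hb 1).mono' (by fun_prop)
    (Filter.Eventually.of_forall fun v => le_of_eq ?_)
  rw [norm_smul, norm_of_nonneg (exp_pos _).le, pow_one, mul_comm]

end Gaussian

section Maxwellian

variable {V : Type*} [NormedAddCommGroup V] [InnerProductSpace ℝ V]

noncomputable def maxwellian (c : V) (d : ℝ) (v : V) : ℝ :=
  (2 * π * d) ^ (-(finrank ℝ V : ℝ) / 2) * rexp (-‖v - c‖ ^ 2 / (2 * d))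

theorem maxwellian_zero_eq (d : ℝ) (v : V) :
    maxwellian 0 d v = (2 * π * d) ^ (-(finrank ℝ V : ℝ) / 2) * rexp (-(2 * d)⁻¹ * ‖v‖ ^ 2) := by
  rw [maxwellian, sub_zero]
  ring_nf

theorem maxwellian_neg (d : ℝ) (v : V) : maxwellian 0 d (-v) = maxwellian 0 d v := by
  simp [maxwellian]

theorem maxwellian_eq_comp_sub (c : V) (d : ℝ) (v : V) :
    maxwellian c d v = maxwellian 0 d (v - c) := by
  simp [maxwellian]

variable [FiniteDimensional ℝ V] [MeasurableSpace V] [BorelSpace V] {d : ℝ}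

theorem integral_maxwellian_zero (hd : 0 < d) : ∫ v, maxwellian (0 : V) d v = 1 := by
  simp_rw [maxwellian_zero_eq d, integral_const_mul]
  rw [GaussianFourier.integral_rexp_neg_mul_sq_norm (by positivity), div_inv_eq_mul,
    show π * (2 * d) = 2 * π * d by ring, neg_div, rpow_neg (by positivity),
    inv_mul_cancel₀ (by positivity)]

variable [Nontrivial V]

theorem integrable_maxwellian_zero (hd : 0 < d) : Integrable (maxwellian (0 : V) d) := by
  simp_rw [funext (maxwellian_zero_eq (V := V) d)]
  simpa using (integrable_norm_pow_mul_exp_neg_mul_sq_norm volume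
    (inv_pos.2 (by positivity : 0 < 2 * d)) 0).const_mul _

theorem integrable_maxwellian_zero_smul (hd : 0 < d) :
    Integrable (fun v : V => maxwellian 0 d v • v) := by
  simp_rw [maxwellian_zero_eq d, mul_smul]
  exact (integrable_exp_neg_mul_sq_norm_smul volume (inv_pos.2 (by positivity))).smul
    ((2 * π * d) ^ (-(finrank ℝ V : ℝ) / 2))

theorem integral_maxwellian_smul (hd : 0 < d) (c : V) :
    ∫ v, maxwellian c d v • v = c := by
  simp_rw [maxwellian_eq_comp_sub c]
  rw [integral_comp_sub_smul_id_of_even (maxwellian_neg d) (integrable_maxwellian_zero hd)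
    (integrable_maxwellian_zero_smul hd), integral_maxwellian_zero hd, one_smul]

theorem integrable_maxwellian_smul (hd : 0 < d) (c : V) :
    Integrable (fun v => maxwellian c d v • v) := by
  simp_rw [maxwellian_eq_comp_sub c]
  exact (integrable_maxwellian_zero hd).comp_sub_smul_id (integrable_maxwellian_zero_smul hd) c

end Maxwellian

theorem bbgsp_temperature_pos {KB ms mk Ts Tk a b γ q : ℝ} (hKB : 0 < KB) (hms : 0 < ms)
    (hmk : 0 < mk) (hTs : 0 < Ts) (hTk : 0 < Tk) (ha : a = mk / (ms + mk))
    (hb : b = 2 * a * ms / (ms + mk)) (hγ : γ = ms * a / 3 * (2 * mk / (ms + mk) - a))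
    (hq : 0 ≤ q) :
    0 < (1 - b) * Ts + b * Tk + γ / KB * q := by
  have hb' : b = 2 * ms * mk / (ms + mk) ^ 2 := by
    rw [hb, ha]
    field_simp
  have hb_pos : 0 < b := by rw [hb']; positivity
  have hb_lt_one : b < 1 := by
    rw [hb', div_lt_one (by positivity)]
    nlinarith
  have hγ' : γ = ms * a ^ 2 / 3 := by
    rw [hγ, ha]
    ring
  have := mul_pos (sub_pos.2 hb_lt_one) hTs
  have := mul_pos hb_pos hTk
  have : 0 ≤ γ / KB * q := by rw [hγ']; positivity
  linarith

theorem bbgsp_momentum_exchange_rate_general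
    (KB ms mk ns nk lamsk lamks : ℝ) (hKB : 0 < KB) (hms : 0 < ms) (hmk : 0 < mk)
    (us uk : EuclideanSpace ℝ (Fin 3)) (Ts Tk : ℝ) (hTs : 0 < Ts) (hTk : 0 < Tk)
    (fs : EuclideanSpace ℝ (Fin 3) → ℝ)
    (hfvint : Integrable (fun v => fs v • v))
    (hf1 : (∫ v, fs v • v) = ns • us)
    (νsk : ℝ) (hνsk : νsk = lamsk * nk)
    (a : ℝ) (ha : a = mk / (ms + mk))
    (usk : EuclideanSpace ℝ (Fin 3)) (husk : usk = (1 - a) • us + a • uk)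
    (b : ℝ) (hb : b = 2 * a * ms / (ms + mk))
    (γ : ℝ) (hγ : γ = ms * a / 3 * (2 * mk / (ms + mk) - a))
    (Tsk : ℝ) (hTsk : Tsk = (1 - b) * Ts + b * Tk + γ / KB * ‖us - uk‖ ^ 2)
    (Mx : EuclideanSpace ℝ (Fin 3) → EuclideanSpace ℝ (Fin 3) → ℝ → ℝ)
    (hMx : ∀ v c d, Mx v c d = (2 * Real.pi * d) ^ (-(3 : ℝ) / 2)
      * Real.exp (-‖v - c‖ ^ 2 / (2 * d)))
    (Rsk Rks : EuclideanSpace ℝ (Fin 3))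
    (hRsk : Rsk = (lamsk * (ms * mk / (ms + mk)) * ns * nk) • (uk - us))
    (hRks : Rks = (lamks * (mk * ms / (mk + ms)) * nk * ns) • (us - uk)) :
    (∫ v, (ms * (νsk * (ns * Mx v usk (KB * Tsk / ms) - fs v))) • v) = Rsk
      ∧ (lamsk = lamks → Rsk + Rks = 0) := by
  set d := KB * Tsk / ms
  have hd : 0 < d := by
    have := bbgsp_temperature_pos hKB hms hmk hTs hTk ha hb hγ (sq_nonneg ‖us - uk‖)
    rw [← hTsk] at this
    positivity
  have hM : ∀ v, Mx v usk d = maxwellian usk d v := by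
    intro v
    rw [hMx, maxwellian, finrank_euclideanSpace_fin, Nat.cast_ofNat]
  simp_rw [hM]
  refine ⟨?_, fun hlam => by rw [hRsk, hRks, ← hlam]; module⟩
  calc ∫ v, (ms * (νsk * (ns * maxwellian usk d v - fs v))) • v
      = (ms * νsk) • (ns • (∫ v, maxwellian usk d v • v) - ∫ v, fs v • v) := by
        have hMns : Integrable (fun v => ns • (maxwellian usk d v • v)) :=
          (integrable_maxwellian_smul hd usk).smul ns
        rw [← integral_smul, ← integral_sub hMns hfvint, ← integral_smul]
        congr 1
        funext v
        module
    _ = Rsk := by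
        rw [integral_maxwellian_smul hd, hf1, husk, hRsk, hνsk, ha]
        match_scalars <;> ring

theorem bbgsp_momentum_exchange_rate
    (KB ms mk ns nk lamsk lamks : ℝ) (hKB : 0 < KB) (hms : 0 < ms) (hmk : 0 < mk)
    (hns : 0 < ns) (hnk : 0 < nk) (hlamsk : 0 < lamsk)
    (us uk : EuclideanSpace ℝ (Fin 3)) (Ts Tk : ℝ) (hTs : 0 < Ts) (hTk : 0 < Tk)
    (fs : EuclideanSpace ℝ (Fin 3) → ℝ)
    (hfint : Integrable fs)
    (hfvint : Integrable (fun v => fs v • v))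
    (hf0 : ∫ v, fs v = ns)
    (hf1 : (∫ v, fs v • v) = ns • us)
    (νsk : ℝ) (hνsk : νsk = lamsk * nk)
    (a : ℝ) (ha : a = mk / (ms + mk))
    (usk : EuclideanSpace ℝ (Fin 3)) (husk : usk = (1 - a) • us + a • uk)
    (b : ℝ) (hb : b = 2 * a * ms / (ms + mk))
    (γ : ℝ) (hγ : γ = ms * a / 3 * (2 * mk / (ms + mk) - a))
    (Tsk : ℝ) (hTsk : Tsk = (1 - b) * Ts + b * Tk + γ / KB * ‖us - uk‖ ^ 2)
    (Mx : EuclideanSpace ℝ (Fin 3) → EuclideanSpace ℝ (Fin 3) → ℝ → ℝ)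
    (hMx : ∀ v c d, Mx v c d = (2 * Real.pi * d) ^ (-(3 : ℝ) / 2)
      * Real.exp (-‖v - c‖ ^ 2 / (2 * d)))
    (Rsk Rks : EuclideanSpace ℝ (Fin 3))
    (hRsk : Rsk = (lamsk * (ms * mk / (ms + mk)) * ns * nk) • (uk - us))
    (hRks : Rks = (lamks * (mk * ms / (mk + ms)) * nk * ns) • (us - uk)) :
    (∫ v, (ms * (νsk * (ns * Mx v usk (KB * Tsk / ms) - fs v))) • v) = Rsk
      ∧ (lamsk = lamks → Rsk + Rks = 0) :=
  bbgsp_momentum_exchange_rate_general KB ms mk ns nk lamsk lamks hKB hms hmk us uk Ts Tk hTs hTk fs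
    hfvint hf1 νsk hνsk a ha usk husk b hb γ hγ Tsk hTsk Mx hMx Rsk Rks hRsk hRks
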